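/- arXiv:2202.13132 — 4 statements merged into one kernel-verified Lean document; each statement's English description precedes it below -/
import Mathlib

section
/- Artin gluing: let F : B ⥤ C be a functor between categories where C has pullbacks. Define gl(F) : (C ↓ F) ⥤ B to be the projection of the comma category of objects (c : C, b : B, v : c ⟶ F.obj b). Then gl(F) is both a cocartesian fibration (cocartesian lift of u : b ⟶ b' at (c, b, v) given by post-composing with F.map u) and a cartesian fibration (cartesian lift of u at (c', b', w) given by the pullback of w along F.map u). -/
open CategoryTheory CategoryTheory.Limits

/-- An arrow of the total category is cocartesian for the functor `F`. -/
def IsCocartArrow {E B : Type*} [Category E] [Category B] (F : E ⥤ B)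
    {e e' : E} (f : e ⟶ e') : Prop :=
  ∀ (e'' : E) (v : F.obj e' ⟶ F.obj e'') (h : e ⟶ e''),
    F.map h = F.map f ≫ v → ∃! g : e' ⟶ e'', F.map g = v ∧ f ≫ g = h

/-- An arrow of the total category is cartesian for the functor `F`. -/
def IsCartArrow {E B : Type*} [Category E] [Category B] (F : E ⥤ B)
    {e e' : E} (f : e ⟶ e') : Prop :=
  ∀ (e'' : E) (v : F.obj e'' ⟶ F.obj e) (h : e'' ⟶ e'),
    F.map h = v ≫ F.map f → ∃! g : e'' ⟶ e, F.map g = v ∧ g ≫ f = h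

/-!
`gl(F)` keeps only the `B`-component `u` of a morphism `(g, u)` of `C ↓ F`. A morphism out of
`(c, b, v)` lying over `u ≫ w` factors through `(𝟙, u) : (c, b, v) ⟶ (c, b', v ≫ F.map u)` by
keeping its `C`-component, which is forced. Dually, a morphism into `(c', b', w)` lying over
`v ≫ u` factors through `(c' ×_{F b'} F b, b, pr₂)`, its `C`-component being the induced map
into the pullback, unique by the universal property.
-/

namespace CategoryTheory.Comma

section Cocartesian

variable {A B T : Type*} [Category A] [Category B] [Category T] {L : A ⥤ T} {R : B ⥤ T}

abbrev pushforward (X : Comma L R) {b' : B} (u : X.right ⟶ b') : Comma L R :=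
  ⟨X.left, b', X.hom ≫ R.map u⟩

abbrev pushforwardHom (X : Comma L R) {b' : B} (u : X.right ⟶ b') : X ⟶ pushforward X u :=
  ⟨𝟙 X.left, u, by simp⟩

theorem isCocartArrow_snd_pushforwardHom (X : Comma L R) {b' : B} (u : X.right ⟶ b') :
    IsCocartArrow (Comma.snd L R) (pushforwardHom X u) := by
  intro Z v h (hv : h.right = u ≫ v)
  let g : pushforward X u ⟶ Z := ⟨h.left, v, by simp [h.w, hv]⟩
  refine ⟨g, ⟨rfl, hom_ext _ _ (Category.id_comp _) hv.symm⟩, ?_⟩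
  rintro g' ⟨hg'_right, hg'_comp⟩
  have hg'_left : g'.left = h.left := by
    simpa using congrArg CommaMorphism.left hg'_comp
  exact hom_ext _ _ hg'_left hg'_right

end Cocartesian

section Cartesian

variable {B C : Type*} [Category B] [Category C] [HasPullbacks C] {F : B ⥤ C}

noncomputable abbrev pullbackAlong (Y : Comma (𝟭 C) F) {b : B} (u : b ⟶ Y.right) :
    Comma (𝟭 C) F :=
  ⟨pullback Y.hom (F.map u), b, pullback.snd Y.hom (F.map u)⟩

noncomputable abbrev pullbackAlongHom (Y : Comma (𝟭 C) F) {b : B} (u : b ⟶ Y.right) :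
    pullbackAlong Y u ⟶ Y :=
  ⟨pullback.fst Y.hom (F.map u), u, by simpa using pullback.condition⟩

theorem isCartArrow_snd_pullbackAlongHom (Y : Comma (𝟭 C) F) {b : B} (u : b ⟶ Y.right) :
    IsCartArrow (Comma.snd (𝟭 C) F) (pullbackAlongHom Y u) := by
  intro Z v h (hv : h.right = v ≫ u)
  have square : h.left ≫ Y.hom = (Z.hom ≫ F.map v) ≫ F.map u := by
    simpa [hv] using h.w
  let g : Z ⟶ pullbackAlong Y u :=
    ⟨pullback.lift h.left (Z.hom ≫ F.map v) square, v, pullback.lift_snd _ _ _⟩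
  refine ⟨g, ⟨rfl, hom_ext _ _ (pullback.lift_fst _ _ _) hv.symm⟩, ?_⟩
  rintro g' ⟨hg'_right : g'.right = v, hg'_comp⟩
  have hg'_fst : g'.left ≫ pullback.fst Y.hom (F.map u) = h.left := by
    simpa using congrArg CommaMorphism.left hg'_comp
  have hg'_snd : g'.left ≫ pullback.snd Y.hom (F.map u) = Z.hom ≫ F.map v := by
    simpa [hg'_right] using g'.w
  refine hom_ext _ _ (pullback.hom_ext ?_ ?_) hg'_right
  · exact hg'_fst.trans (pullback.lift_fst _ _ _).symm
  · exact hg'_snd.trans (pullback.lift_snd _ _ _).symm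

end Cartesian

end CategoryTheory.Comma

/-- The Artin gluing `gl(F) : (C ↓ F) ⥤ B` is a cocartesian fibration (lifts by
post-composition with `F.map u`) and a cartesian fibration (lifts by pullback
along `F.map u`). -/
theorem stmt9 {B C : Type*} [Category B] [Category C] [HasPullbacks C]
    (F : B ⥤ C) :
    (∀ (X : Comma (𝟭 C) F) {b' : B} (u : X.right ⟶ b'),
      IsCocartArrow (Comma.snd (𝟭 C) F)
        ((⟨𝟙 X.left, u, by simp⟩ :
          X ⟶ (⟨X.left, b', X.hom ≫ F.map u⟩ : Comma (𝟭 C) F)))) ∧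
    (∀ (Y : Comma (𝟭 C) F) {b : B} (u : b ⟶ Y.right),
      IsCartArrow (Comma.snd (𝟭 C) F)
        ((⟨pullback.fst Y.hom (F.map u), u, by simpa using pullback.condition⟩ :
          (⟨pullback Y.hom (F.map u), b, pullback.snd Y.hom (F.map u)⟩ :
            Comma (𝟭 C) F) ⟶ Y))) :=
  ⟨fun X _ u => Comma.isCocartArrow_snd_pushforwardHom X u,
    fun Y _ u => Comma.isCartArrow_snd_pullbackAlongHom Y u⟩
end

section
/- The gluing fibration detects pullback-preservation: let B and C be categories with pullbacks and F : B ⥤ C a functor. Then F preserves pullbacks if and only if the bicartesian fibration gl(F) : (C ↓ F) ⥤ B satisfies the Beck–Chevalley condition: for every square in C ↓ F lying over a pullback square in B, if the bottom arrow is cocartesian and the two vertical arrows are cartesian, then the top arrow is cocartesian. -/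
open CategoryTheory CategoryTheory.Limits

/-!
In the gluing fibration an arrow `f : X ⟶ Y` is cocartesian iff `f.left` is invertible, and
cartesian iff the square `f.left, X.hom, Y.hom, F.map f.right` is a pullback in `C`.
Given a square over a pullback in `B` with cartesian sides `l` and `r`, paste the square of `l`
with the `F`-image of the base square and cancel the square of `r`: the square of left
components is a pullback, so an invertible bottom forces an invertible top.
Conversely, over a pullback square `p, x, y, z` in `B`, apply the condition to the square with
corners `⟨F p, p, 𝟙⟩`, `⟨pullback (F g) (F f), x, snd⟩`, `⟨F y, y, 𝟙⟩`, `⟨F y, z, F g⟩`; its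
top is cocartesian exactly when the comparison `F p ⟶ pullback (F g) (F f)` is an isomorphism.
-/

section Fibration

variable {E B : Type*} [Category E] [Category B] {p : E ⥤ B} {e e' : E} {f : e ⟶ e'}

lemma IsCocartArrow.eq_id_of_comp_eq (hf : IsCocartArrow p f) {g : e' ⟶ e'}
    (hg : p.map g = 𝟙 _) (hfg : f ≫ g = f) : g = 𝟙 e' :=
  (hf e' (𝟙 _) f (by simp)).unique ⟨hg, hfg⟩ ⟨by simp, by simp⟩

end Fibration

namespace Gluing

variable {B C : Type*} [Category B] [Category C] {F : B ⥤ C}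

lemma left_comp_hom {X Y : Comma (𝟭 C) F} (f : X ⟶ Y) :
    f.left ≫ Y.hom = X.hom ≫ F.map f.right :=
  f.w

lemma isIso_left_of_isCocartArrow {X Y : Comma (𝟭 C) F} {f : X ⟶ Y}
    (hf : IsCocartArrow (Comma.snd (𝟭 C) F) f) : IsIso f.left := by
  let c : Comma (𝟭 C) F := ⟨X.left, Y.right, X.hom ≫ F.map f.right⟩
  obtain ⟨g, ⟨hg, hfg⟩, -⟩ :=
    hf c (𝟙 _) ⟨𝟙 _, f.right, by simp [c]⟩ (by simp)
  let j : c ⟶ Y := ⟨f.left, 𝟙 _, by simp [c, left_comp_hom]⟩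
  have hgj : g ≫ j = 𝟙 Y :=
    hf.eq_id_of_comp_eq (by simpa [j] using hg) (by ext <;> simp [j, reassoc_of% hfg])
  exact ⟨g.left, by simpa using congrArg CommaMorphism.left hfg,
    by simpa [j] using congrArg CommaMorphism.left hgj⟩

lemma isCocartArrow_of_isIso_left {X Y : Comma (𝟭 C) F} {f : X ⟶ Y} [IsIso f.left] :
    IsCocartArrow (Comma.snd (𝟭 C) F) f := by
  intro Z v h hv
  simp only [Comma.snd_map] at hv
  refine ⟨⟨inv f.left ≫ h.left, v, ?_⟩, ⟨rfl, ?_⟩, ?_⟩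
  · simp [left_comp_hom, hv, ← reassoc_of% (left_comp_hom f)]
  · ext <;> simp [hv]
  · rintro g ⟨hg, hfg⟩
    ext
    · simp [← hfg]
    · exact hg

lemma isCocartArrow_iff_isIso_left {X Y : Comma (𝟭 C) F} (f : X ⟶ Y) :
    IsCocartArrow (Comma.snd (𝟭 C) F) f ↔ IsIso f.left :=
  ⟨isIso_left_of_isCocartArrow, fun _ => isCocartArrow_of_isIso_left⟩

lemma isPullback_of_isCartArrow {X Y : Comma (𝟭 C) F} {f : X ⟶ Y}
    (hf : IsCartArrow (Comma.snd (𝟭 C) F) f) :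
    IsPullback f.left X.hom Y.hom (F.map f.right) := by
  have hlift (s : PullbackCone Y.hom (F.map f.right)) :=
    hf ⟨s.pt, X.right, s.snd⟩ (𝟙 _) ⟨s.fst, f.right, by simp [s.condition]⟩ (by simp)
  choose g hg huniq using hlift
  have hg_right (s) : (g s).right = 𝟙 X.right := (hg s).1
  refine ⟨⟨left_comp_hom f⟩, ⟨PullbackCone.IsLimit.mk _ (fun s => (g s).left) (fun s => ?_)
    (fun s => ?_) (fun s m hm₁ hm₂ => ?_)⟩⟩
  · simpa using congrArg CommaMorphism.left (hg s).2
  · simpa [hg_right] using left_comp_hom (g s)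
  · have := huniq s ⟨m, 𝟙 _, by simpa using hm₂⟩ ⟨rfl, by ext <;> simp [hm₁]⟩
    exact congrArg CommaMorphism.left this

lemma isCartArrow_of_isPullback {X Y : Comma (𝟭 C) F} {f : X ⟶ Y}
    (hf : IsPullback f.left X.hom Y.hom (F.map f.right)) :
    IsCartArrow (Comma.snd (𝟭 C) F) f := by
  intro Z v h hv
  simp only [Comma.snd_map] at hv
  have hw : h.left ≫ Y.hom = (Z.hom ≫ F.map v) ≫ F.map f.right := by
    simp [left_comp_hom, hv]
  refine ⟨⟨hf.lift _ _ hw, v, by simp⟩, ⟨rfl, ?_⟩, ?_⟩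
  · ext <;> simp [hv]
  · rintro g ⟨hg, hgf⟩
    simp only [Comma.snd_map] at hg
    ext
    · apply hf.hom_ext
      · simp [← hgf]
      · simp [left_comp_hom, hg]
    · exact hg

lemma isCartArrow_iff_isPullback {X Y : Comma (𝟭 C) F} (f : X ⟶ Y) :
    IsCartArrow (Comma.snd (𝟭 C) F) f ↔ IsPullback f.left X.hom Y.hom (F.map f.right) :=
  ⟨isPullback_of_isCartArrow, isCartArrow_of_isPullback⟩

def BeckChevalley (F : B ⥤ C) : Prop :=
  ∀ {W X Y Z : Comma (𝟭 C) F} (t : W ⟶ X) (l : W ⟶ Y) (r : X ⟶ Z) (bo : Y ⟶ Z),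
    t ≫ r = l ≫ bo →
    IsPullback ((Comma.snd (𝟭 C) F).map t) ((Comma.snd (𝟭 C) F).map l)
      ((Comma.snd (𝟭 C) F).map r) ((Comma.snd (𝟭 C) F).map bo) →
    IsCocartArrow (Comma.snd (𝟭 C) F) bo →
    IsCartArrow (Comma.snd (𝟭 C) F) l →
    IsCartArrow (Comma.snd (𝟭 C) F) r →
    IsCocartArrow (Comma.snd (𝟭 C) F) t

lemma isPullback_left_of_isPullback_map_right {W X Y Z : Comma (𝟭 C) F} {t : W ⟶ X}
    {l : W ⟶ Y} {r : X ⟶ Z} {bo : Y ⟶ Z} (hsq : t ≫ r = l ≫ bo)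
    (hbase : IsPullback (F.map t.right) (F.map l.right) (F.map r.right) (F.map bo.right))
    (hl : IsPullback l.left W.hom Y.hom (F.map l.right))
    (hr : IsPullback r.left X.hom Z.hom (F.map r.right)) :
    IsPullback t.left l.left r.left bo.left := by
  have hout : IsPullback (t.left ≫ X.hom) l.left (F.map r.right) (bo.left ≫ Z.hom) := by
    rw [left_comp_hom, left_comp_hom]
    exact hl.flip.paste_horiz hbase
  exact hout.of_right (congrArg CommaMorphism.left hsq) hr.flip

lemma beckChevalley_of_isPullback_map
    (hF : ∀ {p x y z : B} (fst : p ⟶ x) (snd : p ⟶ y) (f : x ⟶ z) (g : y ⟶ z),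
      IsPullback fst snd f g → IsPullback (F.map fst) (F.map snd) (F.map f) (F.map g)) :
    BeckChevalley F := by
  intro W X Y Z t l r bo hsq hbase hbo hl hr
  rw [isCocartArrow_iff_isIso_left] at hbo ⊢
  rw [isCartArrow_iff_isPullback] at hl hr
  exact (isPullback_left_of_isPullback_map_right hsq (hF _ _ _ _ hbase) hl hr).isIso_fst_of_isIso

lemma isPullback_map_of_beckChevalley [HasPullbacks C] (hBC : BeckChevalley F)
    {p x y z : B} {fst : p ⟶ x} {snd : p ⟶ y} {f : x ⟶ z} {g : y ⟶ z}
    (h : IsPullback fst snd f g) :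
    IsPullback (F.map fst) (F.map snd) (F.map f) (F.map g) := by
  have hw : F.map snd ≫ F.map g = F.map fst ≫ F.map f := by
    simp only [← F.map_comp, h.w]
  let W : Comma (𝟭 C) F := ⟨F.obj p, p, 𝟙 _⟩
  let X : Comma (𝟭 C) F := ⟨pullback (F.map g) (F.map f), x, pullback.snd _ _⟩
  let Y : Comma (𝟭 C) F := ⟨F.obj y, y, 𝟙 _⟩
  let Z : Comma (𝟭 C) F := ⟨F.obj y, z, F.map g⟩
  let t : W ⟶ X := ⟨pullback.lift _ _ hw, fst, by simpa [W, X] using pullback.lift_snd _ _ hw⟩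
  let l : W ⟶ Y := ⟨F.map snd, snd, by simp [W, Y]⟩
  let r : X ⟶ Z := ⟨pullback.fst _ _, f, pullback.condition⟩
  let bo : Y ⟶ Z := ⟨𝟙 _, g, by simp [Y, Z]⟩
  have : IsIso bo.left := inferInstanceAs (IsIso (𝟙 _))
  have ht : IsCocartArrow (Comma.snd (𝟭 C) F) t :=
    hBC t l r bo (Comma.hom_ext _ _ (by simpa [t, l, r, bo] using pullback.lift_fst _ _ hw) h.w) h
      isCocartArrow_of_isIso_left
      (isCartArrow_of_isPullback (IsPullback.id_vert (F.map snd)))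
      (isCartArrow_of_isPullback (IsPullback.of_hasPullback _ _))
  have := isIso_left_of_isCocartArrow ht
  exact (IsPullback.of_iso_pullback ⟨hw⟩ (asIso t.left) (pullback.lift_fst _ _ _)
    (pullback.lift_snd _ _ _)).flip

end Gluing

theorem stmt10_general {B C : Type*} [Category B] [Category C]
    [HasPullbacks C] (F : B ⥤ C) :
    (∀ {p x y z : B} (fst : p ⟶ x) (snd : p ⟶ y) (f : x ⟶ z) (g : y ⟶ z),
      IsPullback fst snd f g →
      IsPullback (F.map fst) (F.map snd) (F.map f) (F.map g)) ↔
    (∀ {W X Y Z : Comma (𝟭 C) F} (t : W ⟶ X) (l : W ⟶ Y) (r : X ⟶ Z) (bo : Y ⟶ Z),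
      t ≫ r = l ≫ bo →
      IsPullback ((Comma.snd (𝟭 C) F).map t) ((Comma.snd (𝟭 C) F).map l)
        ((Comma.snd (𝟭 C) F).map r) ((Comma.snd (𝟭 C) F).map bo) →
      IsCocartArrow (Comma.snd (𝟭 C) F) bo →
      IsCartArrow (Comma.snd (𝟭 C) F) l →
      IsCartArrow (Comma.snd (𝟭 C) F) r →
      IsCocartArrow (Comma.snd (𝟭 C) F) t) :=
  ⟨Gluing.beckChevalley_of_isPullback_map,
    fun hBC _ _ _ _ _ _ _ _ h => Gluing.isPullback_map_of_beckChevalley hBC h⟩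

/-- `F` preserves pullbacks iff the Artin gluing fibration `gl(F) : (C ↓ F) ⥤ B`
satisfies the Beck–Chevalley condition: over every pullback square in `B`, if the
bottom arrow is cocartesian and the two vertical arrows are cartesian, then the
top arrow is cocartesian. -/
theorem stmt10 {B C : Type*} [Category B] [Category C]
    [HasPullbacks B] [HasPullbacks C] (F : B ⥤ C) :
    (∀ {p x y z : B} (fst : p ⟶ x) (snd : p ⟶ y) (f : x ⟶ z) (g : y ⟶ z),
      IsPullback fst snd f g →
      IsPullback (F.map fst) (F.map snd) (F.map f) (F.map g)) ↔
    (∀ {W X Y Z : Comma (𝟭 C) F} (t : W ⟶ X) (l : W ⟶ Y) (r : X ⟶ Z) (bo : Y ⟶ Z),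
      t ≫ r = l ≫ bo →
      IsPullback ((Comma.snd (𝟭 C) F).map t) ((Comma.snd (𝟭 C) F).map l)
        ((Comma.snd (𝟭 C) F).map r) ((Comma.snd (𝟭 C) F).map bo) →
      IsCocartArrow (Comma.snd (𝟭 C) F) bo →
      IsCartArrow (Comma.snd (𝟭 C) F) l →
      IsCartArrow (Comma.snd (𝟭 C) F) r →
      IsCocartArrow (Comma.snd (𝟭 C) F) t) :=
  stmt10_general F
end

section
/- In a fibration with stable and disjoint internal sums, left cancellation of cocartesian arrows holds: let π : E ⥤ B be a bicartesian fibration over a category B with pullbacks, such that (i) E has pullbacks of cocartesian arrows along arbitrary arrows and cocartesian arrows are stable under such pullbacks, and (ii) for every cocartesian f : d ⟶ e the diagonal d ⟶ d ×_e d is cocartesian. Then whenever g and g ∘ f are cocartesian, f is cocartesian. -/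
/-!
Write `d ×_{e'} e` for the pullback of `f ≫ g` along `g`. Its projection `qsnd` to `e` is
cocartesian by stability, and `f` factors as the graph `σ = ⟨𝟙, f⟩ : d ⟶ d ×_{e'} e` followed by
`qsnd`. The graph is the pullback of the diagonal `e ⟶ e ×_{e'} e` of `g` along `f ×_{e'} e`; that
diagonal is cocartesian by disjointness, hence so is its pullback `σ` by stability, and therefore
so is `f = σ ≫ qsnd`.
-/

open CategoryTheory CategoryTheory.Limits

/-- `π` is a Grothendieck opfibration: cocartesian lifts exist. -/
def HasCocartLifts {E B : Type*} [Category E] [Category B] (π : E ⥤ B) : Prop :=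
  ∀ (e : E) ⦃b' : B⦄ (u : π.obj e ⟶ b'),
    ∃ (e' : E) (h : π.obj e' = b') (f : e ⟶ e'),
      π.map f = u ≫ eqToHom h.symm ∧ IsCocartArrow π f

/-- `π` is a Grothendieck fibration: cartesian lifts exist. -/
def HasCartLifts {E B : Type*} [Category E] [Category B] (π : E ⥤ B) : Prop :=
  ∀ (e : E) ⦃b : B⦄ (u : b ⟶ π.obj e),
    ∃ (e' : E) (h : π.obj e' = b) (f : e' ⟶ e),
      π.map f = eqToHom h ≫ u ∧ IsCartArrow π f


namespace CategoryTheory.IsPullback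

variable {C : Type*} [Category C] {d e e' p q : C} {f : d ⟶ e} {g : e ⟶ e'}
  {p₁ p₂ : p ⟶ e} {qfst : q ⟶ d} {qsnd : q ⟶ e}

theorem graph_diagonal (hp : IsPullback p₁ p₂ g g) (hq : IsPullback qfst qsnd (f ≫ g) g)
    {δ : e ⟶ p} (hδ₁ : δ ≫ p₁ = 𝟙 e) (hδ₂ : δ ≫ p₂ = 𝟙 e) :
    IsPullback (hq.lift (𝟙 d) f (by simp)) f
      (hp.lift (qfst ≫ f) qsnd (by rw [Category.assoc, hq.w])) δ := by
  have right : IsPullback qfst (hp.lift (qfst ≫ f) qsnd (by rw [Category.assoc, hq.w])) f p₁ :=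
    of_bot' hq hp
  have outer : IsPullback (hq.lift (𝟙 d) f (by simp) ≫ qfst) f f (δ ≫ p₁) := by
    simpa only [lift_fst, hδ₁] using id_horiz f
  refine outer.of_right ?_ right
  apply hp.hom_ext <;> simp [hδ₁, hδ₂]

end CategoryTheory.IsPullback

namespace IsCocartArrow

variable {E B : Type*} [Category E] [Category B] {π : E ⥤ B}

theorem comp {d e e' : E} {f : d ⟶ e} {g : e ⟶ e'}
    (hf : IsCocartArrow π f) (hg : IsCocartArrow π g) : IsCocartArrow π (f ≫ g) := by
  intro x v h hv
  rw [π.map_comp, Category.assoc] at hv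
  obtain ⟨k, ⟨hk₁, hk₂⟩, hk_uniq⟩ := hf x (π.map g ≫ v) h hv
  obtain ⟨l, ⟨hl₁, hl₂⟩, hl_uniq⟩ := hg x v k hk₁
  refine ⟨l, ⟨hl₁, by rw [Category.assoc, hl₂, hk₂]⟩, fun l' ⟨hl₁', hl₂'⟩ => hl_uniq l' ⟨hl₁', ?_⟩⟩
  exact hk_uniq (g ≫ l') ⟨by rw [π.map_comp, hl₁'], by rw [← Category.assoc, hl₂']⟩

theorem of_isIso {d e : E} (i : d ⟶ e) [IsIso i] : IsCocartArrow π i := by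
  intro x v h hv
  refine ⟨inv i ≫ h, ⟨?_, IsIso.hom_inv_id_assoc i h⟩, fun k ⟨_, hk⟩ => ?_⟩
  · rw [π.map_comp, hv, Functor.map_inv, IsIso.inv_hom_id_assoc]
  · rw [← hk, IsIso.inv_hom_id_assoc]

theorem of_isPullback_snd {d e x p p' : E} {f : d ⟶ e} {h : x ⟶ e}
    {fst : p ⟶ d} {snd : p ⟶ x} {fst' : p' ⟶ d} {snd' : p' ⟶ x}
    (hpb : IsPullback fst snd f h) (hpb' : IsPullback fst' snd' f h)
    (hsnd' : IsCocartArrow π snd') : IsCocartArrow π snd := by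
  rw [← hpb.isoIsPullback_hom_snd _ _ hpb']
  exact (of_isIso _).comp hsnd'

end IsCocartArrow

theorem stmt12_general {E B : Type*} [Category E] [Category B]
    (π : E ⥤ B)
    (stable : ∀ {d e x : E} (f : d ⟶ e) (h : x ⟶ e), IsCocartArrow π f →
      ∃ (p : E) (fst : p ⟶ d) (snd : p ⟶ x),
        IsPullback fst snd f h ∧ IsCocartArrow π snd)
    (disjoint : ∀ {d e : E} (f : d ⟶ e), IsCocartArrow π f →
      ∀ {p : E} (fst snd : p ⟶ d), IsPullback fst snd f f →
      ∀ (δ : d ⟶ p), δ ≫ fst = 𝟙 d → δ ≫ snd = 𝟙 d → IsCocartArrow π δ)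
    {d e e' : E} (f : d ⟶ e) (g : e ⟶ e')
    (hg : IsCocartArrow π g) (hgf : IsCocartArrow π (f ≫ g)) :
    IsCocartArrow π f := by
  obtain ⟨p, p₁, p₂, hp, -⟩ := stable g g hg
  obtain ⟨q, qfst, qsnd, hq, hqsnd⟩ := stable (f ≫ g) g hgf
  have hδ₁ := hp.lift_fst (𝟙 e) (𝟙 e) rfl
  have hδ₂ := hp.lift_snd (𝟙 e) (𝟙 e) rfl
  have hδ := disjoint g hg p₁ p₂ hp _ hδ₁ hδ₂
  have hgraph := (hp.graph_diagonal hq hδ₁ hδ₂).flip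
  obtain ⟨r, r₁, r₂, hr, hr₂⟩ := stable _ _ hδ
  have hσ := IsCocartArrow.of_isPullback_snd hgraph hr hr₂
  rw [← hq.lift_snd (𝟙 d) f (by simp)]
  exact hσ.comp hqsnd

/-- In a bicartesian fibration with stable and disjoint internal sums,
cocartesian arrows satisfy left cancellation. -/
theorem stmt12 {E B : Type*} [Category E] [Category B] [HasPullbacks B]
    (π : E ⥤ B) (h₁ : HasCocartLifts π) (h₂ : HasCartLifts π)
    (stable : ∀ {d e x : E} (f : d ⟶ e) (h : x ⟶ e), IsCocartArrow π f →
      ∃ (p : E) (fst : p ⟶ d) (snd : p ⟶ x),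
        IsPullback fst snd f h ∧ IsCocartArrow π snd)
    (disjoint : ∀ {d e : E} (f : d ⟶ e), IsCocartArrow π f →
      ∀ {p : E} (fst snd : p ⟶ d), IsPullback fst snd f f →
      ∀ (δ : d ⟶ p), δ ≫ fst = 𝟙 d → δ ≫ snd = 𝟙 d → IsCocartArrow π δ)
    {d e e' : E} (f : d ⟶ e) (g : e ⟶ e')
    (hg : IsCocartArrow π g) (hgf : IsCocartArrow π (f ≫ g)) :
    IsCocartArrow π f :=
  stmt12_general π stable disjoint f g hg hgf
end

section
/- Fibered adjunctions restrict to fiberwise adjunctions: let π : E ⥤ B and ξ : F ⥤ B be Grothendieck opfibrations presented by strict functors P, Q : B ⥤ Cat, and suppose φ : E ⥤ F and ψ : F ⥤ E are functors over B with an adjunction ψ ⊣ φ whose unit η : 𝟭_F ⟶ ψ ⋙ φ is vertical (each component maps to an identity in B). Then for every b : B the restricted functors ψ_b : Q.obj b ⥤ P.obj b and φ_b : P.obj b ⥤ Q.obj b form an adjunction ψ_b ⊣ φ_b. -/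
/-!
Morphisms of a fibre `F.obj c` are the vertical morphisms of `Grothendieck F` over `c`.
Since `adj.homEquiv f = η ≫ φ.map f` and `η` is vertical, `adj.homEquiv` preserves the base of
a morphism, so it restricts to a bijection between vertical morphisms, i.e. between fibre
morphisms. Naturality in the fibres follows from that of `adj.homEquiv`, because the fibre
inclusions `ι` are faithful and commute with `Grothendieck.map`.
-/

open CategoryTheory

namespace CategoryTheory.Grothendieck

variable {C : Type*} [Category C] {F G : C ⥤ Cat} {c : C}

def verticalHomEquiv (x y : F.obj c) :
    (x ⟶ y) ≃ {g : (⟨c, x⟩ : Grothendieck F) ⟶ ⟨c, y⟩ // g.base = 𝟙 c} where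
  toFun f := ⟨(ι F c).map f, rfl⟩
  invFun g := eqToHom (by rw [g.2, F.map_id]; rfl) ≫ g.1.fiber
  left_inv f := by
    dsimp only [ι_map]
    erw [eqToHom_trans_assoc, eqToHom_refl, Category.id_comp]
  right_inv g := by
    apply Subtype.ext
    apply Grothendieck.ext _ _ g.2.symm
    dsimp only [ι_map]
    erw [eqToHom_trans_assoc, eqToHom_trans_assoc, eqToHom_refl, Category.id_comp]

lemma ι_map_verticalHomEquiv_symm {x y : F.obj c}
    (g : {g : (⟨c, x⟩ : Grothendieck F) ⟶ ⟨c, y⟩ // g.base = 𝟙 c}) :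
    (ι F c).map ((verticalHomEquiv x y).symm g) = g.1 :=
  congrArg Subtype.val ((verticalHomEquiv x y).apply_symm_apply g)

lemma map_map_ι_map (α : F ⟶ G) {x y : F.obj c} (f : x ⟶ y) :
    (map α).map ((ι F c).map f) = (ι G c).map ((α.app c).toFunctor.map f) := by
  have h := (ιCompMap α c).hom.naturality f
  erw [Category.comp_id, Category.id_comp] at h
  exact h

end CategoryTheory.Grothendieck

namespace CategoryTheory.Adjunction

open Grothendieck

variable {B : Type*} [Category B] {P Q : B ⥤ Cat} {α : P ⟶ Q} {β : Q ⟶ P}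
  (adj : Grothendieck.map β ⊣ Grothendieck.map α)

lemma homEquiv_apply_base (hunit : ∀ X, (adj.unit.app X).base = 𝟙 X.base)
    {X : Grothendieck Q} {Y : Grothendieck P} (f : (Grothendieck.map β).obj X ⟶ Y) :
    (adj.homEquiv X Y f).base = f.base := by
  rw [homEquiv_unit, comp_base, hunit]
  exact Category.id_comp _

variable (hunit : ∀ X, (adj.unit.app X).base = 𝟙 X.base)

def fiberHomEquiv (b : B) (x : Q.obj b) (y : P.obj b) :
    ((β.app b).toFunctor.obj x ⟶ y) ≃ (x ⟶ (α.app b).toFunctor.obj y) :=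
  (verticalHomEquiv _ _).trans <|
    ((adj.homEquiv ⟨b, x⟩ ⟨b, y⟩).subtypeEquiv fun f => by
      rw [adj.homEquiv_apply_base hunit]).trans (verticalHomEquiv _ _).symm

lemma ι_map_fiberHomEquiv {b : B} {x : Q.obj b} {y : P.obj b}
    (f : (β.app b).toFunctor.obj x ⟶ y) :
    (ι Q b).map (adj.fiberHomEquiv hunit b x y f) =
      adj.homEquiv ⟨b, x⟩ ⟨b, y⟩ ((ι P b).map f) :=
  ι_map_verticalHomEquiv_symm _

lemma ι_map_fiberHomEquiv_symm {b : B} {x : Q.obj b} {y : P.obj b}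
    (g : x ⟶ (α.app b).toFunctor.obj y) :
    (ι P b).map ((adj.fiberHomEquiv hunit b x y).symm g) =
      (adj.homEquiv ⟨b, x⟩ ⟨b, y⟩).symm ((ι Q b).map g) :=
  ι_map_verticalHomEquiv_symm _

-- `erw` and the closing `rfl`: `(ι Q b).obj x` and `⟨b, x⟩` agree only up to unfolding `ι`.
def restrictFiber (b : B) : (β.app b).toFunctor ⊣ (α.app b).toFunctor :=
  mkOfHomEquiv
    { homEquiv := adj.fiberHomEquiv hunit b
      homEquiv_naturality_left_symm := fun f g => (ι P b).map_injective <| by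
        erw [ι_map_fiberHomEquiv_symm, Functor.map_comp, Functor.map_comp,
          ι_map_fiberHomEquiv_symm, homEquiv_naturality_left_symm, map_map_ι_map]
        rfl
      homEquiv_naturality_right := fun f g => (ι Q b).map_injective <| by
        erw [ι_map_fiberHomEquiv, Functor.map_comp, Functor.map_comp, ι_map_fiberHomEquiv,
          homEquiv_naturality_right, map_map_ι_map]
        rfl }

end CategoryTheory.Adjunction

/-- A fibered adjunction with vertical unit between Grothendieck constructions of
strict functors `P, Q : B ⥤ Cat` restricts to fiberwise adjunctions:
if `ψ = Grothendieck.map β ⊣ Grothendieck.map α = φ` with vertical unit, then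
`β.app b ⊣ α.app b` for every `b : B`. -/
theorem stmt18 {B : Type*} [Category B] (P Q : B ⥤ Cat)
    (α : P ⟶ Q) (β : Q ⟶ P)
    (adj : Grothendieck.map β ⊣ Grothendieck.map α)
    (hvert : ∀ x : Grothendieck Q, (adj.unit.app x).base = 𝟙 x.base) :
    ∀ b : B, Nonempty
      ((β.app b).toFunctor ⊣ (α.app b).toFunctor) :=
  fun b => ⟨adj.restrictFiber hvert b⟩
end
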